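/- arXiv:1904.10108 — 2 statements merged into one kernel-verified Lean document; each statement's English description precedes it below -/
import Mathlib

section
/- Generation for left projection: Let ≤ be a binary relation on types satisfying the kernel axioms. If Γ ⊢ π₁ t : A is derivable, then there exist n ≥ 0 and types B₁,…,Bₙ and C₁,…,Cₙ such that B₁∩…∩Bₙ ≤ A (the empty intersection for n = 0 being Ω) and, for each 1 ≤ i ≤ n, Γ ⊢ t : Bᵢ×Cᵢ is derivable. -/
/-- Intersection types: base types, intersection, omega, arrow, product. -/
inductive Ty (X : Type) : Type
  | base : X → Ty X
  | inter : Ty X → Ty X → Ty X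
  | omega : Ty X
  | arrow : Ty X → Ty X → Ty X
  | prod : Ty X → Ty X → Ty X

/-- Lambda terms with pairs and projections, named variables. -/
inductive Tm : Type
  | var : ℕ → Tm
  | lam : ℕ → Tm → Tm
  | app : Tm → Tm → Tm
  | pair : Tm → Tm → Tm
  | fst : Tm → Tm
  | snd : Tm → Tm

/-- Free variables of a term. -/
def Tm.fv : Tm → Finset ℕ
  | .var x => {x}
  | .lam x t => t.fv.erase x
  | .app t u => t.fv ∪ u.fv
  | .pair t u => t.fv ∪ u.fv
  | .fst t => t.fv
  | .snd t => t.fv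

/-- All variables (free or bound) occurring in a term. -/
def Tm.allVars : Tm → Finset ℕ
  | .var x => {x}
  | .lam x t => insert x t.allVars
  | .app t u => t.allVars ∪ u.allVars
  | .pair t u => t.allVars ∪ u.allVars
  | .fst t => t.allVars
  | .snd t => t.allVars

def Tm.size : Tm → ℕ
  | .var _ => 1
  | .lam _ t => t.size + 1
  | .app t u => t.size + u.size + 1
  | .pair t u => t.size + u.size + 1
  | .fst t => t.size + 1
  | .snd t => t.size + 1

/-- Renaming of the free occurrences of a variable `x` into `z`. -/
def Tm.rename (x z : ℕ) : Tm → Tm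
  | .var y => if y = x then .var z else .var y
  | .lam y t => if y = x then .lam y t else .lam y (t.rename x z)
  | .app t u => .app (t.rename x z) (u.rename x z)
  | .pair t u => .pair (t.rename x z) (u.rename x z)
  | .fst t => .fst (t.rename x z)
  | .snd t => .snd (t.rename x z)

theorem Tm.size_rename (x z : ℕ) (t : Tm) : (t.rename x z).size = t.size := by
  induction t with
  | var y => by_cases h : y = x <;> simp [Tm.rename, Tm.size, h]
  | lam y t ih => by_cases h : y = x <;> simp [Tm.rename, Tm.size, h, ih]
  | app t u iht ihu => simp [Tm.rename, Tm.size, iht, ihu]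
  | pair t u iht ihu => simp [Tm.rename, Tm.size, iht, ihu]
  | fst t ih => simp [Tm.rename, Tm.size, ih]
  | snd t ih => simp [Tm.rename, Tm.size, ih]

/-- A variable not belonging to the finite set `s`. -/
def freshVar (s : Finset ℕ) : ℕ := (s.sup id) + 1

/-- Capture-avoiding substitution `t[u/x]`: bound variables are renamed to
fresh ones when they would capture a free variable of `u`. -/
def Tm.subst (t : Tm) (x : ℕ) (u : Tm) : Tm :=
  match t with
  | .var y => if y = x then u else .var y
  | .app t₁ t₂ => .app (t₁.subst x u) (t₂.subst x u)
  | .pair t₁ t₂ => .pair (t₁.subst x u) (t₂.subst x u)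
  | .fst t => .fst (t.subst x u)
  | .snd t => .snd (t.subst x u)
  | .lam y t =>
      if y = x then .lam y t
      else if y ∈ u.fv then
        let z := freshVar (u.fv ∪ t.allVars ∪ {x})
        .lam z ((t.rename y z).subst x u)
      else .lam y (t.subst x u)
  termination_by t.size
  decreasing_by all_goals simp [Tm.size, Tm.size_rename] <;> omega

/-- The typing judgment of the intersection type system with arrow and
product types, parameterized by a subtyping relation `le`. -/
inductive Typing {X : Type} (le : Ty X → Ty X → Prop) : List (ℕ × Ty X) → Tm → Ty X → Prop
  | var (Γ Δ : List (ℕ × Ty X)) (x : ℕ) (A : Ty X) :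
      Typing le (Γ ++ (x, A) :: Δ) (.var x) A
  | sub {Γ t A B} : Typing le Γ t A → le A B → Typing le Γ t B
  | inter {Γ t A B} : Typing le Γ t A → Typing le Γ t B → Typing le Γ t (.inter A B)
  | omega (Γ : List (ℕ × Ty X)) (t : Tm) : Typing le Γ t .omega
  | abs {Γ x t A B} : Typing le (Γ ++ [(x, A)]) t B → Typing le Γ (.lam x t) (.arrow A B)
  | app {Γ t u A B} : Typing le Γ t (.arrow A B) → Typing le Γ u A → Typing le Γ (.app t u) B
  | pair {Γ t u A B} : Typing le Γ t A → Typing le Γ u B → Typing le Γ (.pair t u) (.prod A B)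
  | proj1 {Γ t A B} : Typing le Γ t (.prod A B) → Typing le Γ (.fst t) A
  | proj2 {Γ t A B} : Typing le Γ t (.prod A B) → Typing le Γ (.snd t) B

/-- The kernel properties of a subtyping relation: preorder with `∩` a
greatest lower bound and `Ω` a top element. -/
structure KernelAxioms {X : Type} (le : Ty X → Ty X → Prop) : Prop where
  refl : ∀ A, le A A
  trans : ∀ {A B C}, le A B → le B C → le A C
  inter_l1 : ∀ A B, le (.inter A B) A
  inter_l2 : ∀ A B, le (.inter A B) B
  inter_r : ∀ {A B C}, le C A → le C B → le C (.inter A B)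
  omega_r : ∀ A, le A .omega

/-- Iterated intersection `A₁ ∩ … ∩ Aₙ` of a list of types, the empty
intersection being `Ω`. -/
def interList {X : Type} : List (Ty X) → Ty X
  | [] => .omega
  | [A] => A
  | A :: l => .inter A (interList l)

/-- β-reduction: the congruence closure of `(λx.t) u → t[u/x]`. -/
inductive Beta : Tm → Tm → Prop
  | beta (x : ℕ) (t u : Tm) : Beta (.app (.lam x t) u) (t.subst x u)
  | lam {t t'} (x : ℕ) : Beta t t' → Beta (.lam x t) (.lam x t')
  | appL {t t'} (u : Tm) : Beta t t' → Beta (.app t u) (.app t' u)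
  | appR {u u'} (t : Tm) : Beta u u' → Beta (.app t u) (.app t u')
  | pairL {t t'} (u : Tm) : Beta t t' → Beta (.pair t u) (.pair t' u)
  | pairR {u u'} (t : Tm) : Beta u u' → Beta (.pair t u) (.pair t u')
  | fst {t t'} : Beta t t' → Beta (.fst t) (.fst t')
  | snd {t t'} : Beta t t' → Beta (.snd t) (.snd t')

/-- π-reduction: the congruence closure of `π₁⟨t,u⟩ → t` and `π₂⟨t,u⟩ → u`. -/
inductive Pi : Tm → Tm → Prop
  | fstPair (t u : Tm) : Pi (.fst (.pair t u)) t
  | sndPair (t u : Tm) : Pi (.snd (.pair t u)) u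
  | lam {t t'} (x : ℕ) : Pi t t' → Pi (.lam x t) (.lam x t')
  | appL {t t'} (u : Tm) : Pi t t' → Pi (.app t u) (.app t' u)
  | appR {u u'} (t : Tm) : Pi u u' → Pi (.app t u) (.app t u')
  | pairL {t t'} (u : Tm) : Pi t t' → Pi (.pair t u) (.pair t' u)
  | pairR {u u'} (t : Tm) : Pi u u' → Pi (.pair t u) (.pair t u')
  | fst {t t'} : Pi t t' → Pi (.fst t) (.fst t')
  | snd {t t'} : Pi t t' → Pi (.snd t) (.snd t')

theorem interList_le_mem {X : Type} {le : Ty X → Ty X → Prop} (hker : KernelAxioms le)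
    {l : List (Ty X)} {A : Ty X} (hA : A ∈ l) : le (interList l) A := by
  induction l with
  | nil => cases hA
  | cons B l ih =>
    cases l with
    | nil => simp at hA; subst hA; exact hker.refl _
    | cons C l' =>
      rcases List.mem_cons.mp hA with h | h
      · subst h; exact hker.inter_l1 _ _
      · exact hker.trans (hker.inter_l2 _ _) (ih h)

theorem le_interList {X : Type} {le : Ty X → Ty X → Prop} (hker : KernelAxioms le)
    {l : List (Ty X)} {C : Ty X} (h : ∀ A ∈ l, le C A) : le C (interList l) := by
  induction l with
  | nil => exact hker.omega_r _
  | cons B l ih =>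
    cases l with
    | nil => exact h B (by simp)
    | cons D l' =>
      exact hker.inter_r (h B (by simp))
        (ih fun A hA => h A (List.mem_cons_of_mem _ hA))

/-- Generation for left projection: if `Γ ⊢ π₁ t : A` then there is a finite
family `(Bᵢ, Cᵢ)` with `⋂ᵢ Bᵢ ≤ A` and, for each `i`, `Γ ⊢ t : Bᵢ × Cᵢ`. -/
theorem generation_proj1 {X : Type} [Countable X] {le : Ty X → Ty X → Prop}
    (hker : KernelAxioms le) {Γ : List (ℕ × Ty X)} {t : Tm} {A : Ty X}
    (h : Typing le Γ (.fst t) A) :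
    ∃ l : List (Ty X × Ty X),
      le (interList (l.map Prod.fst)) A ∧
      ∀ p ∈ l, Typing le Γ t (.prod p.1 p.2) := by
  generalize hs : Tm.fst t = s at h
  induction h with
  | var Γ Δ x A => cases hs
  | sub h1 h2 ih =>
    obtain ⟨l, hl, hty⟩ := ih hs
    exact ⟨l, hker.trans hl h2, hty⟩
  | inter h1 h2 ih1 ih2 =>
    obtain ⟨l1, hl1, hty1⟩ := ih1 hs
    obtain ⟨l2, hl2, hty2⟩ := ih2 hs
    refine ⟨l1 ++ l2, ?_, ?_⟩
    · refine hker.inter_r (hker.trans ?_ hl1) (hker.trans ?_ hl2) <;>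
        refine le_interList hker fun A hA => interList_le_mem hker ?_ <;>
        simp_all
    · intro p hp
      rcases List.mem_append.mp hp with h | h
      · exact hty1 p h
      · exact hty2 p h
  | omega Γ s => exact ⟨[], hker.refl _, by simp⟩
  | abs _ _ => cases hs
  | app _ _ _ _ => cases hs
  | pair _ _ _ _ => cases hs
  | proj1 h _ =>
    cases hs
    exact ⟨[(_, _)], hker.refl _, by simpa using h⟩
  | proj2 _ _ => cases hs
end

section
/- Kernel properties of the ISC-induced subtyping: Define A ≤ B to mean that the singleton sequent A ⊢ B is derivable in ISC. Then: A ≤ A for all A; A ≤ B and B ≤ C imply A ≤ C; A∩B ≤ A; A∩B ≤ B; C ≤ A and C ≤ B imply C ≤ A∩B; and if K contains a constructor Ω with c(Ω) = v(Ω) = 0 and w(Ω) = 0, then A ≤ Ω for all A. -/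
/-- Types built from intersection and a set `K` of type constructors, each
`κ : K` having contravariant arity `c κ` and covariant arity `v κ`. -/
inductive GTy (K : Type) (c v : K → ℕ) : Type
  | inter : GTy K c v → GTy K c v → GTy K c v
  | cons : (κ : K) → (Fin (c κ) → GTy K c v) → (Fin (v κ) → GTy K c v) → GTy K c v

/-- The sequent-style subtyping system ISC, parameterized by the width
function `w` (valued in {0,1}). Sequents `Γ ⊢ A` with `Γ` a list of types. -/
inductive ISC {K : Type} {c v : K → ℕ} (w : K → ℕ) : List (GTy K c v) → GTy K c v → Prop
  | wk {Γ Δ : List (GTy K c v)} {C : GTy K c v} (κ : K)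
      (f : Fin (c κ) → GTy K c v) (g : Fin (v κ) → GTy K c v) :
      ISC w (Γ ++ Δ) C → ISC w (Γ ++ GTy.cons κ f g :: Δ) C
  | interR {Γ : List (GTy K c v)} {A B : GTy K c v} :
      ISC w Γ A → ISC w Γ B → ISC w Γ (GTy.inter A B)
  | interL {Γ Δ : List (GTy K c v)} {A B C : GTy K c v} :
      ISC w (Γ ++ A :: B :: Δ) C → ISC w (Γ ++ GTy.inter A B :: Δ) C
  | constr (κ : K) (k : ℕ) (hk : w κ ≤ k)
      (As : Fin (c κ) → Fin k → GTy K c v) (Bs : Fin (v κ) → Fin k → GTy K c v)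
      (A : Fin (c κ) → GTy K c v) (B : Fin (v κ) → GTy K c v) :
      (∀ j i, ISC w [A j] (As j i)) →
      (∀ j, ISC w (List.ofFn (Bs j)) (B j)) →
      ISC w (List.ofFn fun i => GTy.cons κ (fun j => As j i) (fun j => Bs j i))
        (GTy.cons κ A B)

/-!
Transitivity is the admissibility of cut. Weakening is built into ISC, but contraction is
not a rule, so we pass to `ISCSet`, where a context is the *set* of constructor types
(atoms) occurring in it. ISC derivations translate into `ISCSet` derivations, and back
when all widths are at most 1: a `constr` step selecting a family of atoms is replayed on
the occurrences of these atoms in the list, which may be fewer than the members of the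
family but are at least one when the family is nonempty. On sets, cut is proved by
induction on the cut formula and then on the derivation that uses it: a cut atom selected
by a `constr` step is replaced by the atoms from which it was derived, at the cost of cuts
on its arguments.
-/

theorem List.exists_ofFn_comp_sublist {α ι : Type*} {F : List α} {f : ι → α}
    (hf : ∀ i, f i ∈ F) :
    ∃ (n : ℕ) (σ : Fin n → ι),
      (List.ofFn (f ∘ σ)).Sublist F ∧ Set.range (f ∘ σ) = Set.range f := by
  classical
  set L := F.filter (· ∈ Set.range f)
  have hL : ∀ x, x ∈ L ↔ x ∈ Set.range f := by
    intro x
    simp only [L, List.mem_filter, decide_eq_true_eq, and_iff_right_iff_imp]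
    rintro ⟨i, rfl⟩
    exact hf i
  choose σ hσ using fun l : Fin L.length => (hL _).1 (List.getElem_mem l.2)
  have hLσ : List.ofFn (f ∘ σ) = L := by
    conv_rhs => rw [← List.ofFn_getElem (xs := L)]
    exact congrArg List.ofFn (funext hσ)
  refine ⟨L.length, σ, by rw [hLσ]; exact List.filter_sublist, ?_⟩
  refine (Set.range_comp_subset_range σ f).antisymm fun x hx => ?_
  obtain ⟨l, hl, rfl⟩ := List.getElem_of_mem ((hL x).2 hx)
  exact ⟨⟨l, hl⟩, hσ _⟩

namespace GTy

variable {K : Type} {c v : K → ℕ}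

theorem cons_eq_cons_iff {κ : K} {f f' : Fin (c κ) → GTy K c v}
    {g g' : Fin (v κ) → GTy K c v} : cons κ f g = cons κ f' g' ↔ f = f' ∧ g = g' := by
  simp

def atoms : GTy K c v → List (GTy K c v)
  | inter A B => A.atoms ++ B.atoms
  | cons κ f g => [cons κ f g]

def ctxAtoms (Γ : List (GTy K c v)) : Set (GTy K c v) :=
  {a | a ∈ Γ.flatMap atoms}

end GTy

open GTy

namespace ISC

variable {K : Type} {c v : K → ℕ} {w : K → ℕ}

theorem weaken_middle (E : GTy K c v) {Γ Δ : List (GTy K c v)} {C : GTy K c v}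
    (h : ISC w (Γ ++ Δ) C) : ISC w (Γ ++ E :: Δ) C := by
  induction E generalizing Γ Δ with
  | inter A B ihA ihB => exact interL (ihA (Δ := B :: Δ) (ihB h))
  | cons κ f g => exact wk κ f g h

theorem of_sublist {Γ Γ' : List (GTy K c v)} {C : GTy K c v} (hs : Γ.Sublist Γ')
    (h : ISC w Γ C) : ISC w Γ' C := by
  suffices ∀ Γ₀, ISC w (Γ₀ ++ Γ) C → ISC w (Γ₀ ++ Γ') C from this [] h
  clear h
  induction hs with
  | slnil => exact fun _ => id
  | cons a _ ih => exact fun Γ₀ h => weaken_middle a (ih Γ₀ h)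
  | cons_cons a _ ih => exact fun Γ₀ h => by simpa using ih (Γ₀ ++ [a]) (by simpa using h)

theorem of_atoms_middle (E : GTy K c v) {Γ Δ : List (GTy K c v)} {C : GTy K c v}
    (h : ISC w (Γ ++ E.atoms ++ Δ) C) : ISC w (Γ ++ E :: Δ) C := by
  induction E generalizing Γ Δ with
  | inter A B ihA ihB =>
    have hA : ISC w (Γ ++ A :: (B.atoms ++ Δ)) C := ihA (by simpa [atoms] using h)
    have hAB : ISC w (Γ ++ [A] ++ B :: Δ) C := ihB (by simpa using hA)
    exact interL (by simpa using hAB)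
  | cons κ f g => simpa [atoms] using h

theorem of_flatMap_atoms {Γ : List (GTy K c v)} {C : GTy K c v}
    (h : ISC w (Γ.flatMap atoms) C) : ISC w Γ C := by
  suffices ∀ Γ₀, ISC w (Γ₀ ++ Γ.flatMap atoms) C → ISC w (Γ₀ ++ Γ) C from this [] h
  clear h
  induction Γ with
  | nil => exact fun _ => id
  | cons E Γ ih =>
    exact fun Γ₀ h => of_atoms_middle E (ih (Γ₀ ++ E.atoms) (by simpa using h))

theorem inter_left {A B C : GTy K c v} (h : ISC w [A] C) : ISC w [inter A B] C :=
  interL (Γ := []) (of_sublist (by simp) h)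

theorem inter_right {A B C : GTy K c v} (h : ISC w [B] C) : ISC w [inter A B] C :=
  interL (Γ := []) (of_sublist (by simp) h)

theorem refl (hw : ∀ κ, w κ ≤ 1) (A : GTy K c v) : ISC w [A] A := by
  induction A with
  | inter A B ihA ihB => exact interR (inter_left ihA) (inter_right ihB)
  | cons κ f g ihf ihg =>
    simpa using constr κ 1 (hw κ) (fun j _ => f j) (fun j _ => g j) f g
      (fun j _ => ihf j) (fun j => by simpa using ihg j)

theorem cons_of_width_eq_zero {Ω : K} (hv : v Ω = 0) (hΩ : w Ω = 0)
    (f : Fin (c Ω) → GTy K c v) (g : Fin (v Ω) → GTy K c v) (Γ : List (GTy K c v)) :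
    ISC w Γ (cons Ω f g) := by
  refine of_sublist Γ.nil_sublist ?_
  simpa using constr Ω 0 hΩ.le (fun _ => Fin.elim0) (fun _ => Fin.elim0) f g
    (fun _ i => i.elim0) (fun j => (Fin.cast hv j).elim0)

end ISC

/-- ISC with the left rules absorbed: a context is a set of atoms, and a `constr` step may
select any finite family of its members. -/
inductive ISCSet {K : Type} {c v : K → ℕ} (w : K → ℕ) : Set (GTy K c v) → GTy K c v → Prop
  | interR {S : Set (GTy K c v)} {A B : GTy K c v} :
      ISCSet w S A → ISCSet w S B → ISCSet w S (inter A B)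
  | constr {S : Set (GTy K c v)} (κ : K) (ι : Type) [Finite ι] (hι : w κ ≤ Nat.card ι)
      (As : Fin (c κ) → ι → GTy K c v) (Bs : Fin (v κ) → ι → GTy K c v)
      (A : Fin (c κ) → GTy K c v) (B : Fin (v κ) → GTy K c v) :
      (∀ i, cons κ (fun j => As j i) (fun j => Bs j i) ∈ S) →
      (∀ j i, ISCSet w {a | a ∈ (A j).atoms} (As j i)) →
      (∀ j, ISCSet w {a | ∃ i, a ∈ (Bs j i).atoms} (B j)) →
      ISCSet w S (cons κ A B)

namespace ISCSet

variable {K : Type} {c v : K → ℕ}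

def CutAdmissible (w : K → ℕ) (E : GTy K c v) : Prop :=
  ∀ ⦃S T U : Set (GTy K c v)⦄ ⦃C : GTy K c v⦄,
    ISCSet w S E → ISCSet w U C → U ⊆ T ∪ {a | a ∈ E.atoms} → ISCSet w (S ∪ T) C

variable {w : K → ℕ}

theorem mono {S T : Set (GTy K c v)} {C : GTy K c v} (h : ISCSet w S C) (hST : S ⊆ T) :
    ISCSet w T C := by
  induction h generalizing T with
  | interR _ _ ihA ihB => exact interR (ihA hST) (ihB hST)
  | constr κ ι hι As Bs A B hmem hA hB =>
    exact constr κ ι hι As Bs A B (fun i => hST (hmem i)) hA hB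

theorem constr_of_cut_atom {κ : K} {A : Fin (c κ) → GTy K c v} {B : Fin (v κ) → GTy K c v}
    (cutA : ∀ j, CutAdmissible w (A j)) (cutB : ∀ j, CutAdmissible w (B j))
    {S T : Set (GTy K c v)} (hE : ISCSet w S (cons κ A B))
    {κ' : K} {ι : Type} [Finite ι] (hι : w κ' ≤ Nat.card ι)
    {As : Fin (c κ') → ι → GTy K c v} {Bs : Fin (v κ') → ι → GTy K c v}
    {A' : Fin (c κ') → GTy K c v} {B' : Fin (v κ') → GTy K c v}
    (hmem : ∀ i, cons κ' (fun j => As j i) (fun j => Bs j i) ∈ insert (cons κ A B) T)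
    (hA : ∀ j i, ISCSet w {a | a ∈ (A' j).atoms} (As j i))
    (hB : ∀ j, ISCSet w {a | ∃ i, a ∈ (Bs j i).atoms} (B' j)) :
    ISCSet w (S ∪ T) (cons κ' A' B') := by
  by_cases hcut : ∃ i, cons κ' (fun j => As j i) (fun j => Bs j i) = cons κ A B
  swap
  · push Not at hcut
    exact constr κ' ι hι As Bs A' B' (fun i => Or.inr ((hmem i).resolve_left (hcut i))) hA hB
  obtain ⟨i₀, h₀⟩ := hcut
  obtain ⟨rfl, -, -⟩ := cons.inj h₀
  obtain _ | ⟨_, ι₀, hι₀, As₀, Bs₀, _, _, hmem₀, hA₀, hB₀⟩ := hE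
  -- the selected copies of the cut atom are replaced by the family `ι₀` it was derived from
  let ι' := {i // cons κ' (fun j => As j i) (fun j => Bs j i) ≠ cons κ' A B} ⊕ ι₀
  let Bs' j : ι' → GTy K c v := Sum.elim (fun i => Bs j i.1) (Bs₀ j)
  refine constr κ' ι' ?_ (fun j => Sum.elim (fun i => As j i.1) (As₀ j)) Bs' A' B' ?_ ?_ ?_
  · rw [Nat.card_sum]
    omega
  · rintro (⟨i, hi⟩ | l)
    · exact Or.inr ((hmem i).resolve_left hi)
    · exact Or.inl (hmem₀ l)
  · rintro j (⟨i, -⟩ | l)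
    · exact hA j i
    · have hA' := congrFun (cons_eq_cons_iff.1 h₀).1 j ▸ hA j i₀
      exact (cutA j hA' (hA₀ j l) (T := ∅) (by simp)).mono (by simp)
  · intro j
    refine (cutB j (hB₀ j) (hB j) (T := {a | ∃ x, a ∈ (Bs' j x).atoms}) ?_).mono ?_
    · rintro x ⟨i, hx⟩
      by_cases hi : cons κ' (fun j => As j i) (fun j => Bs j i) = cons κ' A B
      · exact Or.inr (congrFun (cons_eq_cons_iff.1 hi).2 j ▸ hx)
      · exact Or.inl ⟨Sum.inl ⟨i, hi⟩, hx⟩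
    · rintro x (⟨l, hx⟩ | hx)
      · exact ⟨Sum.inr l, hx⟩
      · exact hx

theorem cutAdmissible_cons {κ : K} {A : Fin (c κ) → GTy K c v} {B : Fin (v κ) → GTy K c v}
    (cutA : ∀ j, CutAdmissible w (A j)) (cutB : ∀ j, CutAdmissible w (B j)) :
    CutAdmissible w (cons κ A B) := by
  intro S T U C hE hC hU
  induction hC with
  | interR _ _ ih₁ ih₂ => exact interR (ih₁ hU) (ih₂ hU)
  | constr κ' ι hι As Bs A' B' hmem hA hB =>
    refine constr_of_cut_atom cutA cutB hE hι (fun i => ?_) hA hB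
    simpa [atoms, or_comm] using hU (hmem i)

theorem cutAdmissible (E : GTy K c v) : CutAdmissible w E := by
  induction E with
  | inter A B ihA ihB =>
    intro S T U C hE hC hU
    obtain ⟨hEA, hEB⟩ := hE
    have h₁ : ISCSet w (S ∪ (T ∪ {a | a ∈ B.atoms})) C := ihA hEA hC fun x hx => by
      have := hU hx
      simp only [atoms, Set.mem_union, Set.mem_ofPred_eq, List.mem_append] at this ⊢
      tauto
    refine (ihB hEB h₁ (T := S ∪ T) fun x => ?_).mono (by simp)
    simp only [Set.mem_union]
    tauto
  | cons κ A B ihA ihB => exact cutAdmissible_cons ihA ihB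

end ISCSet

section Translation

variable {K : Type} {c v : K → ℕ} {w : K → ℕ}

theorem ISC.toISCSet {Γ : List (GTy K c v)} {C : GTy K c v} (h : ISC w Γ C) :
    ISCSet w (ctxAtoms Γ) C := by
  induction h with
  | wk κ f g _ ih =>
    refine ih.mono fun x hx => ?_
    simp only [ctxAtoms, Set.mem_ofPred_eq, List.flatMap_append, List.mem_append,
      List.flatMap_cons] at hx ⊢
    tauto
  | interR _ _ ih₁ ih₂ => exact .interR ih₁ ih₂
  | interL _ ih =>
    refine ih.mono fun x hx => ?_
    simp only [ctxAtoms, atoms, Set.mem_ofPred_eq, List.flatMap_append, List.mem_append,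
      List.flatMap_cons] at hx ⊢
    tauto
  | constr κ k hk As Bs A B _ _ ihA ihB =>
    refine .constr κ (Fin k) (by simpa using hk) As Bs A B (fun i => ?_)
      (fun j i => (ihA j i).mono ?_) (fun j => (ihB j).mono ?_)
    · simp only [ctxAtoms, Set.mem_ofPred_eq, List.mem_flatMap, List.mem_ofFn]
      exact ⟨_, ⟨i, rfl⟩, by simp [atoms]⟩
    · simp [ctxAtoms]
    · intro x
      simp [ctxAtoms]

theorem ISCSet.toISC (hw : ∀ κ, w κ ≤ 1) {S : Set (GTy K c v)} {C : GTy K c v}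
    (h : ISCSet w S C) {Γ : List (GTy K c v)} (hS : S ⊆ ctxAtoms Γ) : ISC w Γ C := by
  induction h generalizing Γ with
  | interR _ _ ih₁ ih₂ => exact .interR (ih₁ hS) (ih₂ hS)
  | constr κ ι hι As Bs A B hmem _ _ ihA ihB =>
    obtain ⟨n, σ, hsub, hrange⟩ := List.exists_ofFn_comp_sublist
      (f := fun i => cons κ (fun j => As j i) (fun j => Bs j i)) (fun i => hS (hmem i))
    refine ISC.of_flatMap_atoms (ISC.of_sublist hsub (ISC.constr κ n ?_
      (fun j l => As j (σ l)) (fun j l => Bs j (σ l)) A B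
      (fun j l => ihA j (σ l) (by simp [ctxAtoms])) (fun j => ihB j ?_)))
    · suffices w κ ≠ 0 → 0 < n by have := hw κ; omega
      intro hκ
      obtain ⟨i⟩ := (Nat.card_pos_iff (α := ι)).1 (by omega) |>.1
      obtain ⟨l, -⟩ := hrange.ge (Set.mem_range_self i)
      exact l.pos
    · rintro x ⟨i, hx⟩
      obtain ⟨l, hl⟩ := hrange.ge (Set.mem_range_self i)
      simp only [ctxAtoms, Set.mem_ofPred_eq, List.mem_flatMap, List.mem_ofFn]
      exact ⟨_, ⟨l, rfl⟩, congrFun (cons_eq_cons_iff.1 hl).2 j ▸ hx⟩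

theorem ISC.cut (hw : ∀ κ, w κ ≤ 1) {Γ Δ : List (GTy K c v)} {E C : GTy K c v}
    (h₁ : ISC w Γ E) (h₂ : ISC w (E :: Δ) C) : ISC w (Γ ++ Δ) C := by
  refine (ISCSet.cutAdmissible E h₁.toISCSet h₂.toISCSet (T := ctxAtoms Δ) ?_).toISC hw ?_
  · intro x
    simp [ctxAtoms, or_comm]
  · intro x
    simp [ctxAtoms]

end Translation

/-- Kernel properties of the subtyping relation `A ≤ B` defined by
derivability of `A ⊢ A` in ISC: reflexivity, transitivity, the intersection
is a greatest lower bound, and any constructor `Ω` with zero arities and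
width 0 is a top element. -/
theorem ISC.kernel {K : Type} {c v : K → ℕ} (w : K → ℕ) (hw : ∀ κ, w κ ≤ 1) :
    (∀ A : GTy K c v, ISC w [A] A) ∧
    (∀ A B C : GTy K c v, ISC w [A] B → ISC w [B] C → ISC w [A] C) ∧
    (∀ A B : GTy K c v, ISC w [GTy.inter A B] A) ∧
    (∀ A B : GTy K c v, ISC w [GTy.inter A B] B) ∧
    (∀ A B C : GTy K c v, ISC w [C] A → ISC w [C] B → ISC w [C] (GTy.inter A B)) ∧
    (∀ Ω : K, c Ω = 0 → v Ω = 0 → w Ω = 0 →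
      ∀ (f : Fin (c Ω) → GTy K c v) (g : Fin (v Ω) → GTy K c v) (A : GTy K c v),
        ISC w [A] (GTy.cons Ω f g)) :=
  ⟨ISC.refl hw,
    fun _ _ _ h₁ h₂ => by simpa using ISC.cut hw h₁ h₂,
    fun A _ => ISC.inter_left (ISC.refl hw A),
    fun _ B => ISC.inter_right (ISC.refl hw B),
    fun _ _ _ => ISC.interR,
    fun _ _ hv hΩ f g A => ISC.cons_of_width_eq_zero hv hΩ f g [A]⟩
end
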